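/- arXiv:2603.29058 — 4 statements merged into one kernel-verified Lean document; each statement's English description precedes it below -/
import Mathlib

section
/- Let (Ω, F, P) be a probability space, let X and M be random elements taking values in standard Borel measurable spaces, and let V_I and V_D be Bochner-integrable random elements with values in a separable real Banach space. Assume V_I is conditionally independent of X given M, and V_D is conditionally independent of M given X. Then, almost surely, E[V_I + V_D | σ(X) ⊔ σ(M)] = E[V_I | σ(M)] + E[V_D | σ(X)], where σ(X) ⊔ σ(M) denotes the σ-algebra generated jointly by X and M. -/
open MeasureTheory ProbabilityTheory Set

set_option maxHeartbeats 1000000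

section Aux

/-- Conditional expectation commutes with continuous linear functionals. -/
lemma condexp_clm_comm' {Ω E : Type*} [NormedAddCommGroup E] [NormedSpace ℝ E] [CompleteSpace E]
    {m : MeasurableSpace Ω} [mΩ : MeasurableSpace Ω] (hm : m ≤ mΩ)
    {μ : Measure Ω} [IsFiniteMeasure μ]
    (L : E →L[ℝ] ℝ) {f : Ω → E} (hf : Integrable f μ) :
    μ[fun ω => L (f ω) | m] =ᵐ[μ] fun ω => L ((μ[f|m]) ω) := by
  haveI : SigmaFinite (μ.trim hm) := by haveI := isFiniteMeasure_trim (μ := μ) hm; infer_instance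
  refine (ae_eq_condExp_of_forall_setIntegral_eq hm (L.integrable_comp hf)
    (fun s _ _ => (L.integrable_comp integrable_condExp).integrableOn)
    (fun s hs _ => ?_)
    ((L.continuous.comp_stronglyMeasurable stronglyMeasurable_condExp).aestronglyMeasurable)).symm
  rw [L.integral_comp_comm integrable_condExp.integrableOn,
    setIntegral_condExp hm hf hs, ← L.integral_comp_comm hf.integrableOn]

/-- Key product formula: if `f ⫫ X | m'` then
`E[1_{X⁻¹ s₀} f | m'] = κ(·, X⁻¹ s₀) * E[f | m']` a.e., where `κ` is the conditional
expectation kernel. -/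
lemma condexp_indicator_preimage_mul {Ω : Type*} {m' : MeasurableSpace Ω}
    [mΩ : MeasurableSpace Ω] [StandardBorelSpace Ω] (hm' : m' ≤ mΩ)
    {μ : Measure Ω} [IsProbabilityMeasure μ]
    {𝓧 : Type*} [MeasurableSpace 𝓧] {X : Ω → 𝓧} (hX : Measurable X)
    {f : Ω → ℝ} (hfm : Measurable f) (hf : Integrable f μ)
    (hfX : CondIndepFun m' hm' f X μ)
    {s₀ : Set 𝓧} (hs₀ : MeasurableSet s₀) :
    μ[(X ⁻¹' s₀).indicator f | m'] =ᵐ[μ]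
      fun ω => (condExpKernel μ m' ω (X ⁻¹' s₀)).toReal * (μ[f|m']) ω := by
  set A := X ⁻¹' s₀ with hAdef
  have hAm : MeasurableSet A := hX hs₀
  have h_indep : ∀ q : ℚ, ∀ᵐ ω ∂μ,
      condExpKernel μ m' ω (f ⁻¹' Iic (q : ℝ) ∩ A)
        = condExpKernel μ m' ω (f ⁻¹' Iic (q : ℝ)) * condExpKernel μ m' ω A := fun q =>
    ae_of_ae_trim hm'
      (hfX (f ⁻¹' Iic (q : ℝ)) A ⟨Iic (q : ℝ), measurableSet_Iic, rfl⟩ ⟨s₀, hs₀, rfl⟩)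
  have key : ∀ᵐ ω ∂μ, ∫ y, A.indicator f y ∂(condExpKernel μ m' ω)
      = (condExpKernel μ m' ω A).toReal * ∫ y, f y ∂(condExpKernel μ m' ω) := by
    filter_upwards [ae_all_iff.mpr h_indep] with ω hω
    set κ := condExpKernel μ m' ω with hκdef
    have hmap : Measure.map f (κ.restrict A) = κ A • Measure.map f κ := by
      haveI h1 : IsFiniteMeasure (Measure.map f (κ.restrict A)) := by
        constructor
        rw [Measure.map_apply hfm MeasurableSet.univ]
        exact (measure_mono (subset_univ _)).trans_lt (measure_lt_top _ _)
      haveI h2 : IsFiniteMeasure (κ A • Measure.map f κ) := by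
        constructor
        rw [Measure.smul_apply, smul_eq_mul, Measure.map_apply hfm MeasurableSet.univ]
        exact ENNReal.mul_lt_top (measure_lt_top _ _) (measure_lt_top _ _)
      refine ext_of_generate_finite _ Real.borel_eq_generateFrom_Iic_rat
        Real.isPiSystem_Iic_rat (fun t ht => ?_) ?_
      · simp only [mem_iUnion, mem_singleton_iff] at ht
        obtain ⟨q, rfl⟩ := ht
        rw [Measure.map_apply hfm measurableSet_Iic,
          Measure.restrict_apply (hfm measurableSet_Iic), Measure.smul_apply,
          Measure.map_apply hfm measurableSet_Iic, smul_eq_mul, hω q, mul_comm]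
      · rw [Measure.map_apply hfm MeasurableSet.univ, preimage_univ,
          Measure.restrict_apply_univ, Measure.smul_apply,
          Measure.map_apply hfm MeasurableSet.univ, preimage_univ, measure_univ,
          smul_eq_mul, mul_one]
    calc ∫ y, A.indicator f y ∂κ
        = ∫ y in A, f y ∂κ := integral_indicator hAm
      _ = ∫ x, x ∂(Measure.map f (κ.restrict A)) :=
          (integral_map hfm.aemeasurable aestronglyMeasurable_id).symm
      _ = ∫ x, x ∂(κ A • Measure.map f κ) := by rw [hmap]
      _ = (κ A).toReal * ∫ x, x ∂(Measure.map f κ) := by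
          rw [integral_smul_measure, smul_eq_mul]
      _ = (κ A).toReal * ∫ y, f y ∂κ := by
          congr 1
          exact integral_map hfm.aemeasurable aestronglyMeasurable_id
  filter_upwards [condExp_ae_eq_integral_condExpKernel hm' (hf.indicator hAm),
    condExp_ae_eq_integral_condExpKernel hm' hf, key] with ω h1 h2 hkey
  rw [h1, hkey, h2]

/-- If `V ⫫ X | m'` (with `V` strongly measurable and integrable), then
`E[V | σ(X) ⊔ m'] = E[V | m']`. -/
lemma condexp_sup_of_condIndepFun_of_stronglyMeasurable
    {Ω E : Type*} [NormedAddCommGroup E] [NormedSpace ℝ E] [CompleteSpace E]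
    [SecondCountableTopology E] [MeasurableSpace E] [BorelSpace E]
    {m' : MeasurableSpace Ω} [mΩ : MeasurableSpace Ω] [StandardBorelSpace Ω] (hm' : m' ≤ mΩ)
    {μ : Measure Ω} [IsProbabilityMeasure μ]
    {𝓧 : Type*} [MeasurableSpace 𝓧] {X : Ω → 𝓧} (hX : Measurable X)
    {V : Ω → E} (hVsm : StronglyMeasurable V) (hV : Integrable V μ)
    (h : CondIndepFun m' hm' V X μ) :
    μ[V | MeasurableSpace.comap X inferInstance ⊔ m'] =ᵐ[μ] μ[V | m'] := by
  have hm : MeasurableSpace.comap X inferInstance ⊔ m' ≤ mΩ := sup_le hX.comap_le hm'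
  haveI : SigmaFinite (μ.trim hm) := by haveI := isFiniteMeasure_trim (μ := μ) hm; infer_instance
  haveI : SigmaFinite (μ.trim hm') := by haveI := isFiniteMeasure_trim (μ := μ) hm'; infer_instance
  set g : Ω → E := μ[V | m'] with hgdef
  have hgsm : StronglyMeasurable[m'] g := stronglyMeasurable_condExp
  have hgint : Integrable g μ := integrable_condExp
  -- key identity: conditional expectations of the two indicators coincide
  have key : ∀ s₀ : Set 𝓧, MeasurableSet s₀ →
      μ[(X ⁻¹' s₀).indicator g | m'] =ᵐ[μ] μ[(X ⁻¹' s₀).indicator V | m'] := by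
    intro s₀ hs₀
    set A := X ⁻¹' s₀ with hAdef
    have hAm : MeasurableSet A := hX hs₀
    have hdiff : (fun ω => (μ[A.indicator g | m']) ω - (μ[A.indicator V | m']) ω) =ᵐ[μ] 0 := by
      apply ae_eq_zero_of_forall_dual ℝ
      intro L
      -- the V side
      have hindV : (fun ω => L (A.indicator V ω)) = A.indicator fun ω => L (V ω) := by
        funext ω
        by_cases hω : ω ∈ A <;> simp [Set.indicator_apply, hω]
      have h₁ : (fun ω => L ((μ[A.indicator V | m']) ω)) =ᵐ[μ]
          μ[A.indicator (fun ω => L (V ω)) | m'] := by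
        refine (condexp_clm_comm' hm' L (hV.indicator hAm)).symm.trans ?_
        rw [hindV]
      have h₂ : μ[A.indicator (fun ω => L (V ω)) | m'] =ᵐ[μ]
          fun ω => (condExpKernel μ m' ω A).toReal * (μ[fun ω => L (V ω) | m']) ω :=
        condexp_indicator_preimage_mul hm' hX (L.measurable.comp hVsm.measurable)
          (L.integrable_comp hV) (h.comp L.measurable measurable_id) hs₀
      have h₃ : μ[fun ω => L (V ω) | m'] =ᵐ[μ] fun ω => L (g ω) :=
        condexp_clm_comm' hm' L hV
      -- the g side
      have hindg : (fun ω => L (A.indicator g ω)) =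
          (fun ω => L (g ω)) * A.indicator fun _ => (1 : ℝ) := by
        funext ω
        by_cases hω : ω ∈ A <;> simp [Set.indicator_apply, hω]
      have h₄ : (fun ω => L ((μ[A.indicator g | m']) ω)) =ᵐ[μ]
          μ[(fun ω => L (g ω)) * A.indicator (fun _ => (1 : ℝ)) | m'] := by
        refine (condexp_clm_comm' hm' L (hgint.indicator hAm)).symm.trans ?_
        rw [hindg]
      have hLg : StronglyMeasurable[m'] fun ω => L (g ω) :=
        L.continuous.comp_stronglyMeasurable hgsm
      have hprod : Integrable ((fun ω => L (g ω)) * A.indicator fun _ => (1 : ℝ)) μ := by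
        rw [← hindg]
        exact (L.integrable_comp (hgint.indicator hAm)).congr
          (Filter.Eventually.of_forall fun ω => rfl)
      have h₅ : μ[(fun ω => L (g ω)) * A.indicator (fun _ => (1 : ℝ)) | m'] =ᵐ[μ]
          (fun ω => L (g ω)) * μ[A.indicator (fun _ => (1 : ℝ)) | m'] :=
        condExp_mul_of_stronglyMeasurable_left hLg hprod ((integrable_const (1 : ℝ)).indicator hAm)
      have h₆ : (μ[A.indicator (fun _ => (1 : ℝ)) | m'] : Ω → ℝ) =ᵐ[μ]
          fun ω => (condExpKernel μ m' ω A).toReal :=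
        (condExpKernel_ae_eq_condExp hm' hAm).symm
      filter_upwards [h₁, h₂, h₃, h₄, h₅, h₆] with ω hω₁ hω₂ hω₃ hω₄ hω₅ hω₆
      have hVside : L ((μ[A.indicator V | m']) ω)
          = (condExpKernel μ m' ω A).toReal * L (g ω) := by
        rw [hω₁, hω₂, hω₃]
      have hgside : L ((μ[A.indicator g | m']) ω)
          = L (g ω) * (condExpKernel μ m' ω A).toReal := by
        rw [hω₄, hω₅]
        simp only [Pi.mul_apply]
        rw [hω₆]
      simp only [Pi.zero_apply, map_sub, hVside, hgside, mul_comm, sub_self]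
    filter_upwards [hdiff] with ω hω
    exact sub_eq_zero.mp hω
  -- the generating π-system
  set C : Set (Set Ω) :=
    {u | ∃ s₀ : Set 𝓧, MeasurableSet s₀ ∧ ∃ B, MeasurableSet[m'] B ∧ u = B ∩ X ⁻¹' s₀}
    with hCdef
  have hgen : MeasurableSpace.comap X inferInstance ⊔ m' = MeasurableSpace.generateFrom C := by
    refine le_antisymm (sup_le ?_ ?_) (MeasurableSpace.generateFrom_le ?_)
    · rintro s ⟨s₀, hs₀, rfl⟩
      exact MeasurableSpace.measurableSet_generateFrom
        ⟨s₀, hs₀, univ, MeasurableSet.univ, (univ_inter _).symm⟩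
    · intro B hB
      exact MeasurableSpace.measurableSet_generateFrom
        ⟨univ, MeasurableSet.univ, B, hB, by rw [preimage_univ, inter_univ]⟩
    · rintro u ⟨s₀, hs₀, B, hB, rfl⟩
      exact MeasurableSet.inter (MeasurableSpace.le_def.mp le_sup_right _ hB)
        (MeasurableSpace.le_def.mp le_sup_left _ ⟨s₀, hs₀, rfl⟩)
  have hPi : IsPiSystem C := by
    rintro u ⟨a, ha, B₁, hB₁, rfl⟩ v ⟨b, hb, B₂, hB₂, rfl⟩ -
    exact ⟨a ∩ b, ha.inter hb, B₁ ∩ B₂, hB₁.inter hB₂, by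
      rw [preimage_inter, inter_inter_inter_comm]⟩
  -- the set-integral equality on the generated σ-algebra
  have hsets : ∀ ⦃t : Set Ω⦄, MeasurableSet[MeasurableSpace.comap X inferInstance ⊔ m'] t →
      ∫ x in t, g x ∂μ = ∫ x in t, V x ∂μ := by
    refine fun t ht => MeasurableSpace.induction_on_inter (m := MeasurableSpace.comap X inferInstance ⊔ m')
      (C := fun t _ => ∫ x in t, g x ∂μ = ∫ x in t, V x ∂μ) hgen hPi (by simp) ?_ ?_ ?_ t ht
    · rintro t ⟨s₀, hs₀, B, hB, rfl⟩
      have hAm : MeasurableSet (X ⁻¹' s₀) := hX hs₀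
      calc ∫ x in B ∩ X ⁻¹' s₀, g x ∂μ
          = ∫ x in B, (X ⁻¹' s₀).indicator g x ∂μ := (setIntegral_indicator hAm).symm
        _ = ∫ x in B, (μ[(X ⁻¹' s₀).indicator g | m']) x ∂μ :=
            (setIntegral_condExp hm' (hgint.indicator hAm) hB).symm
        _ = ∫ x in B, (μ[(X ⁻¹' s₀).indicator V | m']) x ∂μ :=
            integral_congr_ae (ae_restrict_of_ae (key s₀ hs₀))
        _ = ∫ x in B, (X ⁻¹' s₀).indicator V x ∂μ :=
            setIntegral_condExp hm' (hV.indicator hAm) hB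
        _ = ∫ x in B ∩ X ⁻¹' s₀, V x ∂μ := setIntegral_indicator hAm
    · intro t ht hPt
      have htm : MeasurableSet t := MeasurableSpace.le_def.mp hm _ ht
      have h₁ : ∫ x in tᶜ, g x ∂μ = ∫ x, g x ∂μ - ∫ x in t, g x ∂μ :=
        eq_sub_of_add_eq' (integral_add_compl htm hgint)
      have h₂ : ∫ x in tᶜ, V x ∂μ = ∫ x, V x ∂μ - ∫ x in t, V x ∂μ :=
        eq_sub_of_add_eq' (integral_add_compl htm hV)
      rw [h₁, h₂, hPt, integral_condExp hm']
    · intro f hdisj hfm hPf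
      rw [integral_iUnion (fun i => MeasurableSpace.le_def.mp hm _ (hfm i)) hdisj hgint.integrableOn,
        integral_iUnion (fun i => MeasurableSpace.le_def.mp hm _ (hfm i)) hdisj hV.integrableOn]
      exact tsum_congr hPf
  exact (ae_eq_condExp_of_forall_setIntegral_eq hm hV
    (fun s _ _ => hgint.integrableOn)
    (fun s hs _ => hsets hs)
    ((hgsm.mono (le_sup_right : m' ≤ MeasurableSpace.comap X inferInstance ⊔ m')).aestronglyMeasurable (μ := μ))).symm

/-- If `V ⪻ X | m'` (with `V` integrable), then `E[V | σ(X) ⊔ m'] = E[V | m']`. -/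
lemma condexp_sup_of_condIndepFun
    {Ω E : Type*} [NormedAddCommGroup E] [NormedSpace ℝ E] [CompleteSpace E]
    [SecondCountableTopology E] [MeasurableSpace E] [BorelSpace E]
    {m' : MeasurableSpace Ω} [mΩ : MeasurableSpace Ω] [StandardBorelSpace Ω] (hm' : m' ≤ mΩ)
    {μ : Measure Ω} [IsProbabilityMeasure μ]
    {𝓧 : Type*} [MeasurableSpace 𝓧] {X : Ω → 𝓧} (hX : Measurable X)
    {V : Ω → E} (hV : Integrable V μ)
    (h : CondIndepFun m' hm' V X μ) :
    μ[V | MeasurableSpace.comap X inferInstance ⊔ m'] =ᵐ[μ] μ[V | m'] := by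
  set V' : Ω → E := hV.1.mk V with hV'def
  have hsm : StronglyMeasurable V' := hV.1.stronglyMeasurable_mk
  have hae : V =ᵐ[μ] V' := hV.1.ae_eq_mk
  have hV' : Integrable V' μ := hV.congr hae
  set N : Set Ω := toMeasurable μ {ω | V ω ≠ V' ω} with hNdef
  have hNm : MeasurableSet N := measurableSet_toMeasurable μ _
  have hN0 : μ N = 0 := by
    rw [hNdef, measure_toMeasurable]
    exact hae
  have hc0 : (μ⟦N | m'⟧ : Ω → ℝ) =ᵐ[μ] 0 := by
    have hind : (N.indicator fun _ => (1 : ℝ)) =ᵐ[μ] 0 := by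
      filter_upwards [measure_eq_zero_iff_ae_notMem.mp hN0] with ω hω
      simp [Set.indicator_of_notMem hω]
    exact (condExp_congr_ae hind).trans (by rw [condExp_zero])
  have hker : ∀ᵐ ω ∂μ, condExpKernel μ m' ω N = 0 := by
    filter_upwards [condExpKernel_ae_eq_condExp hm' hNm, hc0] with ω h₁ h₂
    have : (condExpKernel μ m' ω N).toReal = 0 := by
      rw [← measureReal_def, h₁, h₂]; rfl
    exact ((ENNReal.toReal_eq_zero_iff _).mp this).resolve_right (measure_ne_top _ _)
  have hker' : ∀ᵐ ω ∂(μ.trim hm'), condExpKernel μ m' ω N = 0 := by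
    rw [Filter.eventually_iff, mem_ae_iff]
    have hTm : MeasurableSet[m'] {ω | condExpKernel μ m' ω N = 0}ᶜ :=
      ((measurable_condExpKernel hNm) (measurableSet_singleton 0)).compl
    rw [trim_measurableSet_eq hm' hTm]
    have := hker
    rw [Filter.eventually_iff, mem_ae_iff] at this
    exact this
  have h' : CondIndepFun m' hm' V' X μ := by
    refine Kernel.IndepFun.congr' h ?_ ?_
    · filter_upwards [hker'] with ω hω
      refine Filter.eventuallyEq_iff_exists_mem.mpr ⟨{ω | V ω = V' ω}, ?_, fun x hx => hx⟩
      rw [mem_ae_iff]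
      exact measure_mono_null (fun x hx => subset_toMeasurable μ _ hx) hω
    · exact Filter.Eventually.of_forall fun _ => Filter.EventuallyEq.rfl
  calc μ[V | MeasurableSpace.comap X inferInstance ⊔ m']
      =ᵐ[μ] μ[V' | MeasurableSpace.comap X inferInstance ⊔ m'] := condExp_congr_ae hae
    _ =ᵐ[μ] μ[V' | m'] :=
        condexp_sup_of_condIndepFun_of_stronglyMeasurable hm' hX hsm hV' h'
    _ =ᵐ[μ] μ[V | m'] := condExp_congr_ae hae.symm

end Aux

/-- **Additivity of the conditional mean under the mediation decomposition.**
If `V_I ⪻ X | M` and `V_D ⪻ M | X` (conditional independence of the generated σ-algebras),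
with `V_I, V_D` Bochner-integrable random elements of a separable Banach space and `X, M`
random elements of standard Borel spaces, then almost surely
`E[V_I + V_D | σ(X) ⊔ σ(M)] = E[V_I | σ(M)] + E[V_D | σ(X)]`. -/
theorem condExp_add_of_condIndep
    {Ω 𝓧 𝓜 E : Type*} {mΩ : MeasurableSpace Ω} [StandardBorelSpace Ω]
    [MeasurableSpace 𝓧] [StandardBorelSpace 𝓧]
    [MeasurableSpace 𝓜] [StandardBorelSpace 𝓜]
    [NormedAddCommGroup E] [NormedSpace ℝ E] [CompleteSpace E]
    [SecondCountableTopology E] [MeasurableSpace E] [BorelSpace E]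
    (μ : Measure Ω) [IsProbabilityMeasure μ]
    (X : Ω → 𝓧) (M : Ω → 𝓜) (hX : Measurable X) (hM : Measurable M)
    (VI VD : Ω → E) (hVI : Integrable VI μ) (hVD : Integrable VD μ)
    (hVIX : CondIndepFun (MeasurableSpace.comap M inferInstance) hM.comap_le VI X μ)
    (hVDM : CondIndepFun (MeasurableSpace.comap X inferInstance) hX.comap_le VD M μ) :
    μ[fun ω => VI ω + VD ω |
        MeasurableSpace.comap X inferInstance ⊔ MeasurableSpace.comap M inferInstance]
      =ᵐ[μ]
    (μ[VI | MeasurableSpace.comap M inferInstance]) +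
      (μ[VD | MeasurableSpace.comap X inferInstance]) := by
  have h1 : μ[VI | MeasurableSpace.comap X inferInstance ⊔ MeasurableSpace.comap M inferInstance]
      =ᵐ[μ] μ[VI | MeasurableSpace.comap M inferInstance] :=
    condexp_sup_of_condIndepFun hM.comap_le hX hVI hVIX
  have h2 : μ[VD | MeasurableSpace.comap M inferInstance ⊔ MeasurableSpace.comap X inferInstance]
      =ᵐ[μ] μ[VD | MeasurableSpace.comap X inferInstance] :=
    condexp_sup_of_condIndepFun hX.comap_le hM hVD hVDM
  rw [sup_comm] at h2
  have hadd : μ[fun ω => VI ω + VD ω |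
      MeasurableSpace.comap X inferInstance ⊔ MeasurableSpace.comap M inferInstance]
      =ᵐ[μ] μ[VI | MeasurableSpace.comap X inferInstance ⊔ MeasurableSpace.comap M inferInstance]
        + μ[VD | MeasurableSpace.comap X inferInstance ⊔ MeasurableSpace.comap M inferInstance] :=
    condExp_add hVI hVD _
  refine hadd.trans ?_
  filter_upwards [h1, h2] with ω hω₁ hω₂
  simp only [Pi.add_apply, hω₁, hω₂]
end

section
/- Let 𝒜 be a unital C*-algebra, a ∈ 𝒜 a nonnegative element (0 ≤ a), ε > 0, and η ∈ (0,1]. Then a + ε·1 is invertible in 𝒜 and ‖ a^{1+η} (a + ε·1)^{-1} − a^{η} ‖ ≤ ε^{η}, where the real powers a^{1+η} and a^{η} of the nonnegative element a are defined via the continuous functional calculus. -/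
open scoped NNReal

lemma tikhonov_key_ineq (x ε η : ℝ) (hx : 0 ≤ x) (hε : 0 < ε) (hη : 0 < η) (hη1 : η ≤ 1) :
    |x ^ (1 + η) / (x + ε) - x ^ η| ≤ ε ^ η := by
  have hxε : 0 < x + ε := by linarith
  have h1 : x ^ (1 + η) = x * x ^ η := by
    rw [Real.rpow_add' hx (by positivity), Real.rpow_one]
  have h2 : x ^ (1 + η) / (x + ε) - x ^ η = -(x ^ η * (ε / (x + ε))) := by
    rw [h1]; field_simp; ring
  rw [h2, abs_neg, abs_of_nonneg (by positivity)]
  have h3 : x ^ η ≤ (x + ε) ^ η := Real.rpow_le_rpow hx (by linarith) hη.le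
  calc x ^ η * (ε / (x + ε)) ≤ (x + ε) ^ η * (ε / (x + ε)) :=
        mul_le_mul_of_nonneg_right h3 (by positivity)
    _ = ε * (x + ε) ^ (η - 1) := by
        rw [Real.rpow_sub hxε, Real.rpow_one]; ring
    _ ≤ ε * ε ^ (η - 1) := by
        refine mul_le_mul_of_nonneg_left ?_ hε.le
        exact Real.rpow_le_rpow_of_nonpos hε (by linarith) (by linarith)
    _ = ε ^ η := by
        nth_rewrite 1 [← Real.rpow_one ε]
        rw [← Real.rpow_add hε]; ring_nf

/-- **Operator Tikhonov bias bound.** In a unital C*-algebra, for a nonnegative element `a`,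
`ε > 0` and `η ∈ (0,1]`, the element `a + ε·1` is invertible and
`‖a^{1+η}(a + ε·1)⁻¹ − a^η‖ ≤ ε^η`, real powers being given by the continuous functional
calculus. -/
theorem cstar_tikhonov_bias_bound
    {A : Type*} [CStarAlgebra A] [PartialOrder A] [StarOrderedRing A]
    (a : A) (ha : 0 ≤ a) (ε η : ℝ) (hε : 0 < ε) (hη : 0 < η) (hη1 : η ≤ 1) :
    IsUnit (a + ε • (1 : A)) ∧
      ‖a ^ ((1 : ℝ) + η) * Ring.inverse (a + ε • (1 : A)) - a ^ η‖ ≤ ε ^ η := by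
  have ha' : IsSelfAdjoint a := .of_nonneg ha
  have hspec : ∀ x ∈ spectrum ℝ a, 0 ≤ x := fun x hx => spectrum_nonneg_of_nonneg ha hx
  have hne : ∀ x ∈ spectrum ℝ a, x + ε ≠ 0 := fun x hx => by
    have := hspec x hx; positivity
  have hadd : a + ε • (1 : A) = cfc (fun x : ℝ => x + ε) a := by
    rw [cfc_add (a := a) (fun x : ℝ => x) (fun _ => ε), cfc_id' ℝ a, cfc_const ε a,
      Algebra.algebraMap_eq_smul_one]
  have hunit : IsUnit (a + ε • (1 : A)) := by
    rw [hadd]; exact (isUnit_cfc_iff (fun x : ℝ => x + ε) a).mpr hne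
  refine ⟨hunit, ?_⟩
  have hcpow : ∀ y : ℝ, 0 ≤ y →
      Continuous (fun x : ℝ => ((Real.toNNReal x ^ y : ℝ≥0) : ℝ)) := fun y hy =>
    NNReal.continuous_coe.comp <|
      (NNReal.continuous_rpow_const hy).comp continuous_real_toNNReal
  have hpow : ∀ y : ℝ, 0 ≤ y →
      a ^ y = cfc (fun x : ℝ => ((Real.toNNReal x ^ y : ℝ≥0) : ℝ)) a := by
    intro y hy
    rw [CFC.rpow_def, cfc_nnreal_eq_real (a := a) (ha := ha)]
  have hdiv : a ^ ((1 : ℝ) + η) * Ring.inverse (a + ε • (1 : A)) =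
      cfc (fun x : ℝ => ((Real.toNNReal x ^ ((1 : ℝ) + η) : ℝ≥0) : ℝ) / (x + ε)) a := by
    rw [hpow _ (by positivity), hadd,
      cfc_map_div (fun x : ℝ => ((Real.toNNReal x ^ ((1 : ℝ) + η) : ℝ≥0) : ℝ))
        (fun x : ℝ => x + ε) a hne ((hcpow _ (by positivity)).continuousOn) (by fun_prop)]
  rw [hdiv, hpow η hη.le,
    ← cfc_sub (fun x : ℝ => ((Real.toNNReal x ^ ((1 : ℝ) + η) : ℝ≥0) : ℝ) / (x + ε))
      (fun x : ℝ => ((Real.toNNReal x ^ η : ℝ≥0) : ℝ)) a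
      (ContinuousOn.div ((hcpow _ (by positivity)).continuousOn) (by fun_prop) hne)
      ((hcpow η hη.le).continuousOn)]
  refine norm_cfc_le (by positivity) fun x hx => ?_
  have hx0 : 0 ≤ x := hspec x hx
  have hco : ∀ y : ℝ, ((Real.toNNReal x ^ y : ℝ≥0) : ℝ) = x ^ y := fun y => by
    rw [NNReal.coe_rpow, Real.coe_toNNReal x hx0]
  rw [Real.norm_eq_abs, hco, hco]
  exact tikhonov_key_ineq x ε η hx0 hε hη hη1
end

section
/- Let 𝒜 be a unital C*-algebra, let a, â ∈ 𝒜 be nonnegative elements, let s ∈ 𝒜, let η ∈ (0,1] and ε > 0, and set b := s · a^{1+η}, with real powers of nonnegative elements defined via the continuous functional calculus. Then for every b̂ ∈ 𝒜, the element â + ε·1 is invertible and ‖ b̂ (â + ε·1)^{-1} − s a^{η} ‖ ≤ ε^{-1} ‖ b̂ − b ‖ + ε^{-1} ‖s‖ · ‖a‖^{η} · ‖ â − a ‖ + ε^{η} ‖s‖. -/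
open scoped NNReal

section Aux

variable {A : Type*} [CStarAlgebra A] [PartialOrder A] [StarOrderedRing A]

/-- `CFC.rpow` expressed via the real continuous functional calculus. -/
lemma aux_rpow_eq_cfc_real (a : A) (ha : 0 ≤ a) (y : ℝ) :
    a ^ y = cfc (fun t : ℝ => t ^ y) a := by
  rw [CFC.rpow_def, cfc_nnreal_eq_real _ _ ha]
  refine cfc_congr fun t ht => ?_
  have h0 : 0 ≤ t := spectrum_nonneg_of_nonneg ha ht
  rw [NNReal.coe_rpow, Real.coe_toNNReal t h0]

/-- `cfc (fun t => (t+ε)⁻¹) x` is a two-sided inverse of `x + ε • 1` for `0 ≤ x`, `0 < ε`. -/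
lemma aux_inv_cfc (x : A) (hx : 0 ≤ x) {ε : ℝ} (hε : 0 < ε) :
    (cfc (fun t : ℝ => (t + ε)⁻¹) x) * (x + ε • 1) = 1 ∧
      (x + ε • 1) * (cfc (fun t : ℝ => (t + ε)⁻¹) x) = 1 := by
  have hx' : IsSelfAdjoint x := .of_nonneg hx
  have hxS : ∀ t ∈ spectrum ℝ x, (0 : ℝ) ≤ t := fun t ht => spectrum_nonneg_of_nonneg hx ht
  have hne : ∀ t ∈ spectrum ℝ x, t + ε ≠ 0 := fun t ht => by
    have := hxS t ht; positivity
  have hc1 : ContinuousOn (fun t : ℝ => t + ε) (spectrum ℝ x) :=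
    (continuous_id.add continuous_const).continuousOn
  have hc2 : ContinuousOn (fun t : ℝ => (t + ε)⁻¹) (spectrum ℝ x) := hc1.inv₀ hne
  have hx1 : x + ε • 1 = cfc (fun t : ℝ => t + ε) x := by
    rw [cfc_add x (fun t : ℝ => t) (fun _ : ℝ => ε) continuous_id.continuousOn
      continuous_const.continuousOn, cfc_id' (R := ℝ) x, cfc_const ε x,
      Algebra.algebraMap_eq_smul_one]
  constructor
  · rw [hx1, ← cfc_mul _ _ x hc2 hc1]
    have : cfc (fun t : ℝ => (t + ε)⁻¹ * (t + ε)) x = cfc (fun _ : ℝ => (1 : ℝ)) x :=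
      cfc_congr fun t ht => inv_mul_cancel₀ (hne t ht)
    rw [this, cfc_const_one ℝ x]
  · rw [hx1, ← cfc_mul _ _ x hc1 hc2]
    have : cfc (fun t : ℝ => (t + ε) * (t + ε)⁻¹) x = cfc (fun _ : ℝ => (1 : ℝ)) x :=
      cfc_congr fun t ht => mul_inv_cancel₀ (hne t ht)
    rw [this, cfc_const_one ℝ x]

end Aux

/-- **Deterministic perturbation bound for regularized regression operators.** In a unital
C*-algebra, for nonnegative elements `a, â`, any `s`, `η ∈ (0,1]`, `ε > 0`, and
`b = s·a^{1+η}`, the element `â + ε·1` is invertible and for every `b̂`,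
`‖b̂(â + ε·1)⁻¹ − s a^η‖ ≤ ε⁻¹‖b̂ − b‖ + ε⁻¹‖s‖‖a‖^η‖â − a‖ + ε^η‖s‖`. -/
theorem cstar_perturbation_bound
    {A : Type*} [CStarAlgebra A] [PartialOrder A] [StarOrderedRing A]
    (a ahat s : A) (ha : 0 ≤ a) (hahat : 0 ≤ ahat)
    (η ε : ℝ) (hη : 0 < η) (hη1 : η ≤ 1) (hε : 0 < ε)
    (b : A) (hb : b = s * a ^ ((1 : ℝ) + η)) :
    IsUnit (ahat + ε • (1 : A)) ∧
      ∀ bhat : A,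
        ‖bhat * Ring.inverse (ahat + ε • (1 : A)) - s * a ^ η‖ ≤
          ε⁻¹ * ‖bhat - b‖ + ε⁻¹ * ‖s‖ * ‖a‖ ^ η * ‖ahat - a‖ + ε ^ η * ‖s‖ := by
  rcases subsingleton_or_nontrivial A with hsub | hnt
  · refine ⟨isUnit_of_subsingleton _, fun bhat => ?_⟩
    have h1 : ∀ x : A, ‖x‖ = 0 := fun x => by rw [Subsingleton.elim x 0, norm_zero]
    simp only [h1, Real.zero_rpow hη.ne', mul_zero, zero_mul, add_zero]
    positivity
  have hsa : IsSelfAdjoint a := .of_nonneg ha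
  have haS : ∀ t ∈ spectrum ℝ a, (0 : ℝ) ≤ t := fun t ht => spectrum_nonneg_of_nonneg ha ht
  have hahatS : ∀ t ∈ spectrum ℝ ahat, (0 : ℝ) ≤ t := fun t ht =>
    spectrum_nonneg_of_nonneg hahat ht
  set Rh := cfc (fun t : ℝ => (t + ε)⁻¹) ahat with hRh_def
  set R := cfc (fun t : ℝ => (t + ε)⁻¹) a with hR_def
  obtain ⟨hRh1, hRh2⟩ := aux_inv_cfc ahat hahat hε
  obtain ⟨hR1, hR2⟩ := aux_inv_cfc a ha hε
  set u : Aˣ := ⟨ahat + ε • 1, Rh, hRh2, hRh1⟩ with hu_def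
  have hUnit : IsUnit (ahat + ε • (1 : A)) := ⟨u, rfl⟩
  refine ⟨hUnit, fun bhat => ?_⟩
  have hRinv : Ring.inverse (ahat + ε • (1 : A)) = Rh := by
    have : Ring.inverse (u : A) = ((u⁻¹ : Aˣ) : A) := Ring.inverse_unit u
    simpa [hu_def] using this
  rw [hRinv]
  -- continuity facts
  have hrc : ∀ y : ℝ, 0 ≤ y → Continuous (fun t : ℝ => t ^ y) := by
    intro y hy
    rw [continuous_iff_continuousAt]
    exact fun t => Real.continuousAt_rpow_const t y (Or.inr hy)
  have hcaS : ∀ t ∈ spectrum ℝ a, t + ε ≠ 0 := fun t ht => by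
    have := haS t ht; positivity
  have hc1 : ContinuousOn (fun t : ℝ => t + ε) (spectrum ℝ a) :=
    (continuous_id.add continuous_const).continuousOn
  have hc2 : ContinuousOn (fun t : ℝ => (t + ε)⁻¹) (spectrum ℝ a) := hc1.inv₀ hcaS
  set P := a ^ ((1 : ℝ) + η) with hP_def
  set Q := a ^ η with hQ_def
  -- P * R as cfc
  have hPR : P * R = cfc (fun t : ℝ => t ^ ((1 : ℝ) + η) * (t + ε)⁻¹) a := by
    rw [hP_def, aux_rpow_eq_cfc_real a ha, hR_def,
      ← cfc_mul _ _ a ((hrc _ (by linarith)).continuousOn) hc2]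
  -- ‖Rh‖ ≤ ε⁻¹
  have hnRh : ‖Rh‖ ≤ ε⁻¹ := by
    refine norm_cfc_le (by positivity) fun t ht => ?_
    have h0 := hahatS t ht
    rw [Real.norm_eq_abs, abs_of_nonneg (by positivity)]
    rw [inv_le_inv₀ (by positivity) hε]
    linarith
  -- ‖P * R‖ ≤ ‖a‖ ^ η
  have hnPR : ‖P * R‖ ≤ ‖a‖ ^ η := by
    rw [hPR]
    refine norm_cfc_le (Real.rpow_nonneg (norm_nonneg a) η) fun t ht => ?_
    have h0 := haS t ht
    have hta : t ≤ ‖a‖ := by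
      have := spectrum.norm_le_norm_of_mem ht
      rwa [Real.norm_eq_abs, abs_of_nonneg h0] at this
    have hsplitpow : t ^ ((1 : ℝ) + η) = t * t ^ η := by
      rw [Real.rpow_add' h0 (by linarith), Real.rpow_one]
    rw [Real.norm_eq_abs, abs_of_nonneg (by positivity)]
    calc t ^ ((1 : ℝ) + η) * (t + ε)⁻¹ = t ^ η * (t * (t + ε)⁻¹) := by
          rw [hsplitpow]; ring
      _ ≤ t ^ η * 1 := by
          refine mul_le_mul_of_nonneg_left ?_ (Real.rpow_nonneg h0 η)
          rw [← div_eq_mul_inv, div_le_one (by positivity)]; linarith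
      _ = t ^ η := mul_one _
      _ ≤ ‖a‖ ^ η := Real.rpow_le_rpow h0 hta hη.le
  -- ‖P * R - Q‖ ≤ ε ^ η
  have hnBias : ‖P * R - Q‖ ≤ ε ^ η := by
    have hQcfc : Q = cfc (fun t : ℝ => t ^ η) a := aux_rpow_eq_cfc_real a ha η
    have : P * R - Q =
        cfc (fun t : ℝ => t ^ ((1 : ℝ) + η) * (t + ε)⁻¹ - t ^ η) a := by
      rw [hPR, hQcfc, cfc_sub (fun t : ℝ => t ^ ((1 : ℝ) + η) * (t + ε)⁻¹) (fun t : ℝ => t ^ η) a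
        (((hrc ((1 : ℝ) + η) (by linarith)).continuousOn).mul hc2) ((hrc _ hη.le).continuousOn)]
    rw [this]
    refine norm_cfc_le (Real.rpow_nonneg hε.le η) fun t ht => ?_
    have h0 := haS t ht
    have htε : (0 : ℝ) < t + ε := by linarith
    have hsplitpow : t ^ ((1 : ℝ) + η) = t * t ^ η := by
      rw [Real.rpow_add' h0 (by linarith), Real.rpow_one]
    have heq : t ^ ((1 : ℝ) + η) * (t + ε)⁻¹ - t ^ η = -(ε * t ^ η * (t + ε)⁻¹) := by
      rw [hsplitpow]
      field_simp
      ring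
    rw [heq, norm_neg, Real.norm_eq_abs, abs_of_nonneg (by positivity),
      ← div_eq_mul_inv, div_le_iff₀ htε]
    -- show ε * t ^ η ≤ ε ^ η * (t + ε)
    rcases le_total t ε with hle | hle
    · have h1 : t ^ η ≤ ε ^ η := Real.rpow_le_rpow h0 hle hη.le
      have h2 : (0 : ℝ) ≤ ε ^ η := Real.rpow_nonneg hε.le η
      nlinarith
    · have htpos : (0 : ℝ) < t := lt_of_lt_of_le hε hle
      have h1 : ε ^ (1 - η) ≤ t ^ (1 - η) := Real.rpow_le_rpow hε.le hle (by linarith)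
      have h2 : ε = ε ^ η * ε ^ (1 - η) := by
        rw [← Real.rpow_add hε]; norm_num
      have h3 : t ^ (1 - η) * t ^ η = t := by
        rw [← Real.rpow_add htpos]; norm_num
      have h4 : (0 : ℝ) ≤ t ^ η := Real.rpow_nonneg h0 η
      have h5 : (0 : ℝ) ≤ ε ^ η := Real.rpow_nonneg hε.le η
      have key : ε * t ^ η ≤ ε ^ η * t := by
        calc ε * t ^ η = ε ^ η * (ε ^ (1 - η) * t ^ η) := by conv_lhs => rw [h2]; rw [mul_assoc]
          _ ≤ ε ^ η * (t ^ (1 - η) * t ^ η) :=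
              mul_le_mul_of_nonneg_left (mul_le_mul_of_nonneg_right h1 h4) h5
          _ = ε ^ η * t := by rw [h3]
      nlinarith
  -- algebraic decomposition
  have hmid : P * Rh - P * R = (P * R) * (a - ahat) * Rh := by
    have e1 : P * (R * (a + ε • 1)) * Rh = P * Rh := by rw [hR1, mul_one]
    have e2 : (P * R) * ((ahat + ε • 1) * Rh) = P * R := by rw [hRh2, mul_one]
    calc P * Rh - P * R = P * (R * (a + ε • 1)) * Rh - (P * R) * ((ahat + ε • 1) * Rh) := by
          rw [e1, e2]
      _ = (P * R) * ((a + ε • 1) - (ahat + ε • 1)) * Rh := by noncomm_ring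
      _ = (P * R) * (a - ahat) * Rh := by
          congr 1
          congr 1
          abel
  have hsplit : bhat * Rh - s * Q =
      (bhat - b) * Rh + (s * (P * R)) * (a - ahat) * Rh + s * (P * R - Q) := by
    have : (s * (P * R)) * (a - ahat) * Rh = s * (P * Rh - P * R) := by
      rw [hmid]; noncomm_ring
    rw [this, hb]
    noncomm_ring
  rw [hsplit]
  have hT1 : ‖(bhat - b) * Rh‖ ≤ ε⁻¹ * ‖bhat - b‖ := by
    calc ‖(bhat - b) * Rh‖ ≤ ‖bhat - b‖ * ‖Rh‖ := norm_mul_le _ _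
      _ ≤ ‖bhat - b‖ * ε⁻¹ := mul_le_mul_of_nonneg_left hnRh (norm_nonneg _)
      _ = ε⁻¹ * ‖bhat - b‖ := mul_comm _ _
  have hT2 : ‖(s * (P * R)) * (a - ahat) * Rh‖ ≤ ε⁻¹ * ‖s‖ * ‖a‖ ^ η * ‖ahat - a‖ := by
    have hs : ‖s * (P * R)‖ ≤ ‖s‖ * ‖a‖ ^ η :=
      (norm_mul_le _ _).trans (mul_le_mul_of_nonneg_left hnPR (norm_nonneg s))
    calc ‖(s * (P * R)) * (a - ahat) * Rh‖ ≤ ‖(s * (P * R)) * (a - ahat)‖ * ‖Rh‖ :=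
          norm_mul_le _ _
      _ ≤ ‖s * (P * R)‖ * ‖a - ahat‖ * ‖Rh‖ :=
          mul_le_mul_of_nonneg_right (norm_mul_le _ _) (norm_nonneg _)
      _ ≤ (‖s‖ * ‖a‖ ^ η) * ‖a - ahat‖ * ε⁻¹ := by
          refine mul_le_mul (mul_le_mul_of_nonneg_right hs (norm_nonneg _)) hnRh
            (norm_nonneg _) ?_
          positivity
      _ = ε⁻¹ * ‖s‖ * ‖a‖ ^ η * ‖ahat - a‖ := by rw [norm_sub_rev]; ring
  have hT3 : ‖s * (P * R - Q)‖ ≤ ε ^ η * ‖s‖ := by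
    calc ‖s * (P * R - Q)‖ ≤ ‖s‖ * ‖P * R - Q‖ := norm_mul_le _ _
      _ ≤ ‖s‖ * ε ^ η := mul_le_mul_of_nonneg_left hnBias (norm_nonneg _)
      _ = ε ^ η * ‖s‖ := mul_comm _ _
  calc ‖(bhat - b) * Rh + (s * (P * R)) * (a - ahat) * Rh + s * (P * R - Q)‖
      ≤ ‖(bhat - b) * Rh‖ + ‖(s * (P * R)) * (a - ahat) * Rh‖ + ‖s * (P * R - Q)‖ :=
        norm_add₃_le
    _ ≤ ε⁻¹ * ‖bhat - b‖ + ε⁻¹ * ‖s‖ * ‖a‖ ^ η * ‖ahat - a‖ + ε ^ η * ‖s‖ := by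
        exact add_le_add (add_le_add hT1 hT2) hT3
end

section
/- Fix a real number α > 1. There exist constants 0 < c ≤ C < ∞ (depending only on α) such that for every ε ∈ (0, 1], the series ∑_{j=1}^∞ j^{-α} / (j^{-α} + ε)² converges, and c · ε^{-(α+1)/α} ≤ ∑_{j=1}^∞ j^{-α} / (j^{-α} + ε)² ≤ C · ε^{-(α+1)/α}. -/
open scoped BigOperators

/-- Tangent-type step inequality: `(α-1)·(a+1)^{-α} ≤ a^{1-α} - (a+1)^{1-α}` for `a ≥ 1`. -/
lemma eff_dim_step (α : ℝ) (hα : 1 < α) (a : ℝ) (ha : 1 ≤ a) :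
    (α - 1) * (a + 1) ^ (-α) ≤ a ^ (1 - α) - (a + 1) ^ (1 - α) := by
  have ha0 : (0:ℝ) < a := lt_of_lt_of_le one_pos ha
  have hb0 : (0:ℝ) < a + 1 := by linarith
  have hu : (1:ℝ) < (a+1)/a := by rw [lt_div_iff₀ ha0]; linarith
  have hu0 : (0:ℝ) < (a+1)/a := lt_trans one_pos hu
  have hlog : 1/(a+1) ≤ Real.log ((a+1)/a) := by
    have h1 : Real.log (a/(a+1)) ≤ a/(a+1) - 1 :=
      Real.log_le_sub_one_of_pos (by positivity)
    have h2 : Real.log (a/(a+1)) = - Real.log ((a+1)/a) := by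
      rw [← Real.log_inv]; congr 1; field_simp
    have h3 : a/(a+1) - 1 = -(1/(a+1)) := by field_simp; ring
    rw [h2, h3] at h1; linarith
  have hkey : 1 + (α-1)/(a+1) ≤ ((a+1)/a) ^ (α-1) := by
    have hexp : (α-1) * Real.log ((a+1)/a) + 1 ≤ Real.exp ((α-1) * Real.log ((a+1)/a)) :=
      Real.add_one_le_exp _
    have h4 : (α-1) * (1/(a+1)) ≤ (α-1) * Real.log ((a+1)/a) :=
      mul_le_mul_of_nonneg_left hlog (by linarith)
    rw [Real.rpow_def_of_pos hu0, mul_comm (Real.log ((a+1)/a))]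
    have h5 : (α-1)/(a+1) = (α-1) * (1/(a+1)) := by ring
    linarith
  have hab : a ^ (1-α) = (a+1) ^ (1-α) * ((a+1)/a) ^ (α-1) := by
    have hinv : ((a+1)/a : ℝ) = (a/(a+1))⁻¹ := by rw [inv_div]
    rw [hinv, Real.inv_rpow (by positivity), ← Real.rpow_neg (by positivity),
      show -(α-1) = 1-α by ring, ← Real.mul_rpow (by positivity) (by positivity)]
    congr 1
    field_simp
  have hba : (a+1) ^ (1-α) * ((α-1)/(a+1)) = (α-1) * (a+1) ^ (-α) := by
    rw [show (1-α : ℝ) = -α + 1 by ring, Real.rpow_add hb0, Real.rpow_one]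
    field_simp
  have hbpos : (0:ℝ) ≤ (a+1) ^ (1-α) := le_of_lt (Real.rpow_pos_of_pos hb0 _)
  calc (α - 1) * (a + 1) ^ (-α) = (a+1) ^ (1-α) * ((α-1)/(a+1)) := hba.symm
    _ ≤ (a+1) ^ (1-α) * (((a+1)/a) ^ (α-1) - 1) := by
        apply mul_le_mul_of_nonneg_left _ hbpos
        linarith
    _ = a ^ (1-α) - (a+1) ^ (1-α) := by rw [mul_sub, ← hab, mul_one]

/-- Tail bound for the `p`-series: `∑_{j≥0} (j+N+1)^{-α} ≤ N^{1-α}/(α-1)` for `N ≥ 1`. -/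
lemma eff_dim_tail (α : ℝ) (hα : 1 < α) (N : ℕ) (hN : 1 ≤ N)
    (hs : Summable (fun j : ℕ => ((j : ℝ) + N + 1) ^ (-α))) :
    ∑' j : ℕ, ((j : ℝ) + N + 1) ^ (-α) ≤ (N : ℝ) ^ (1 - α) / (α - 1) := by
  have hN1 : (1:ℝ) ≤ (N:ℝ) := by exact_mod_cast hN
  set g : ℕ → ℝ := fun j => ((j : ℝ) + N) ^ (1 - α) with hg
  set d : ℕ → ℝ := fun j => g j - g (j+1) with hd
  have hstep : ∀ j : ℕ, (α - 1) * ((j : ℝ) + N + 1) ^ (-α) ≤ d j := by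
    intro j
    have ha : (1:ℝ) ≤ (j:ℝ) + N := le_add_of_nonneg_of_le (Nat.cast_nonneg j) hN1
    have h := eff_dim_step α hα ((j:ℝ) + N) ha
    simp only [hd, hg]
    push_cast
    convert h using 3 <;> ring
  have hd0 : ∀ j, 0 ≤ d j := by
    intro j
    have h1 : 0 ≤ (α - 1) * ((j : ℝ) + N + 1) ^ (-α) := by
      apply mul_nonneg (by linarith)
      exact le_of_lt (Real.rpow_pos_of_pos (by positivity) _)
    linarith [hstep j]
  have hpart : ∀ n : ℕ, ∑ i ∈ Finset.range n, d i ≤ (N : ℝ) ^ (1 - α) := by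
    intro n
    have h2 : ∑ i ∈ Finset.range n, d i = g 0 - g n := Finset.sum_range_sub' g n
    rw [h2]
    have h0 : g 0 = (N:ℝ) ^ (1-α) := by simp [hg]
    have hn : 0 ≤ g n := le_of_lt (Real.rpow_pos_of_pos (by positivity) _)
    linarith
  have hdsum : Summable d := summable_of_sum_range_le hd0 hpart
  have htd : ∑' j, d j ≤ (N:ℝ) ^ (1-α) := Summable.tsum_le_of_sum_range_le hdsum hpart
  have hmul : (α - 1) * ∑' j : ℕ, ((j : ℝ) + N + 1) ^ (-α) ≤ ∑' j, d j := by
    rw [← tsum_mul_left]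
    exact Summable.tsum_le_tsum hstep (hs.mul_left _) hdsum
  rw [le_div_iff₀ (by linarith : (0:ℝ) < α - 1), mul_comm]
  linarith


section EffDim

variable {α : ℝ}

lemma eff_dim_xsum (hα : 1 < α) : Summable (fun j : ℕ => ((j : ℝ) + 1) ^ (-α)) := by
  have h1 : Summable (fun n : ℕ => (n : ℝ) ^ (-α)) :=
    Real.summable_nat_rpow.2 (by linarith)
  have h2 := (summable_nat_add_iff 1).2 h1
  apply h2.congr
  intro n; push_cast; ring_nf

lemma eff_dim_xpos (j : ℕ) : 0 < ((j : ℝ) + 1) ^ (-α) :=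
  Real.rpow_pos_of_pos (by positivity) _

lemma eff_dim_fle {ε : ℝ} (hε : 0 < ε) (j : ℕ) :
    ((j : ℝ) + 1) ^ (-α) / (((j : ℝ) + 1) ^ (-α) + ε) ^ 2 ≤ ((j : ℝ) + 1) ^ (-α) * (ε^2)⁻¹ := by
  set x := ((j : ℝ) + 1) ^ (-α) with hx
  have hxpos : 0 < x := eff_dim_xpos j
  have hden : 0 < (x + ε) ^ 2 := by positivity
  have h1 : ε ^ 2 ≤ (x + ε)^2 := by nlinarith
  have h2 : x * (ε^2)⁻¹ * ε^2 ≤ x * (ε^2)⁻¹ * (x + ε)^2 :=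
    mul_le_mul_of_nonneg_left h1 (by positivity)
  have h3 : x * (ε^2)⁻¹ * ε^2 = x := by field_simp
  rw [div_le_iff₀ hden]
  linarith

lemma eff_dim_fsummable (hα : 1 < α) {ε : ℝ} (hε : 0 < ε) :
    Summable (fun j : ℕ => ((j : ℝ) + 1) ^ (-α) / (((j : ℝ) + 1) ^ (-α) + ε) ^ 2) := by
  apply Summable.of_nonneg_of_le
    (fun j => div_nonneg (eff_dim_xpos j).le (by positivity))
    (fun j => eff_dim_fle hε j)
    ((eff_dim_xsum hα).mul_right (ε^2)⁻¹)

lemma eff_dim_cutoff (hα : 1 < α) {ε : ℝ} (hε : 0 < ε) (hε1 : ε ≤ 1) :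
    ∃ (t : ℝ) (N : ℕ), 0 < t ∧ 1 ≤ t ∧ t ^ (-α) = ε ∧ ε ^ (-(α+1)/α) = t / ε ∧
      1 ≤ N ∧ t ≤ (N:ℝ) ∧ (N:ℝ) ≤ 2*t := by
  have hα0 : (0:ℝ) < α := lt_trans one_pos hα
  have hα0' : α ≠ 0 := ne_of_gt hα0
  set t : ℝ := ε ^ (-(1/α)) with htdef
  have ht0 : (0:ℝ) < t := Real.rpow_pos_of_pos hε _
  have ht1 : (1:ℝ) ≤ t :=
    Real.one_le_rpow_of_pos_of_le_one_of_nonpos hε hε1 (neg_nonpos.2 (by positivity))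
  refine ⟨t, ⌈t⌉₊, ht0, ht1, ?_, ?_, Nat.one_le_ceil_iff.2 ht0, Nat.le_ceil t, ?_⟩
  · rw [htdef, ← Real.rpow_mul (le_of_lt hε)]
    have h : -(1/α) * -α = 1 := by field_simp
    rw [h, Real.rpow_one]
  · have h1 : (-(α+1)/α : ℝ) = -(1/α) + (-1) := by field_simp; ring
    rw [h1, Real.rpow_add hε, Real.rpow_neg_one]
    try rw [← htdef]
    try ring
    try rfl
  · have h2 := Nat.ceil_lt_add_one (le_of_lt ht0)
    linarith

set_option maxHeartbeats 800000 in
lemma eff_dim_lower (hα : 1 < α) {ε : ℝ} (hε : 0 < ε) (hε1 : ε ≤ 1) :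
    (4:ℝ) ^ (-α) / 4 * ε ^ (-(α + 1) / α) ≤
      ∑' j : ℕ, ((j : ℝ) + 1) ^ (-α) / (((j : ℝ) + 1) ^ (-α) + ε) ^ 2 := by
  obtain ⟨t, N, ht0, ht1, htε, hpow, hN1, htN, hN2t⟩ := eff_dim_cutoff hα hε hε1
  set x : ℕ → ℝ := fun j => ((j : ℝ) + 1) ^ (-α) with hx
  set f : ℕ → ℝ := fun j => x j / (x j + ε) ^ 2 with hf
  have hxpos : ∀ j, 0 < x j := fun j => eff_dim_xpos j
  have hden : ∀ j, 0 < (x j + ε) ^ 2 := fun j => by positivity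
  have hf0 : ∀ j, 0 ≤ f j := fun j => div_nonneg (le_of_lt (hxpos j)) (le_of_lt (hden j))
  have hfsum : Summable f := eff_dim_fsummable hα hε
  have hblock : ∀ j ∈ Finset.Ico N (2*N), (4:ℝ)^(-α) * ε / (4 * ε^2) ≤ f j := by
    intro j hj
    rw [Finset.mem_Ico] at hj
    obtain ⟨hj1, hj2⟩ := hj
    have hj1' : (N:ℝ) ≤ (j:ℝ) := by exact_mod_cast hj1
    have hj2' : (j:ℝ) + 1 ≤ 2*(N:ℝ) := by
      have : j + 1 ≤ 2*N := hj2
      exact_mod_cast this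
    have hxle : x j ≤ ε := by
      rw [← htε]
      exact Real.rpow_le_rpow_of_nonpos ht0 (by linarith) (by linarith)
    have hxge : (4:ℝ)^(-α) * ε ≤ x j := by
      have h1 : ((j:ℝ)+1) ≤ 4*t := by linarith
      have h2 : (4*t) ^ (-α) ≤ ((j:ℝ)+1) ^ (-α) :=
        Real.rpow_le_rpow_of_nonpos (by positivity) h1 (by linarith)
      have h3 : (4*t : ℝ) ^ (-α) = 4^(-α) * t^(-α) :=
        Real.mul_rpow (by norm_num) (le_of_lt ht0)
      rw [h3, htε] at h2
      exact h2
    have hd2 : (x j + ε)^2 ≤ 4 * ε^2 := by nlinarith [hxpos j]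
    exact div_le_div₀ (le_of_lt (hxpos j)) hxge (hden j) hd2
  have hsum1 : (N:ℝ) * ((4:ℝ)^(-α) * ε / (4 * ε^2)) ≤ ∑ j ∈ Finset.Ico N (2*N), f j := by
    have hcard : (Finset.Ico N (2*N)).card = N := by
      rw [Nat.card_Ico]; omega
    calc (N:ℝ) * ((4:ℝ)^(-α) * ε / (4 * ε^2))
        = ∑ _j ∈ Finset.Ico N (2*N), (4:ℝ)^(-α) * ε / (4 * ε^2) := by
          rw [Finset.sum_const, hcard, nsmul_eq_mul]
      _ ≤ ∑ j ∈ Finset.Ico N (2*N), f j := Finset.sum_le_sum hblock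
  have hsum2 : ∑ j ∈ Finset.Ico N (2*N), f j ≤ ∑' j, f j :=
    Summable.sum_le_tsum _ (fun j _ => hf0 j) hfsum
  have heq : (4:ℝ)^(-α) / 4 * (t/ε) ≤ (N:ℝ) * ((4:ℝ)^(-α) * ε / (4 * ε^2)) := by
    have h4 : (0:ℝ) < (4:ℝ)^(-α) := Real.rpow_pos_of_pos (by norm_num) _
    have h5 : (N:ℝ) * ((4:ℝ)^(-α) * ε / (4 * ε^2)) = (4:ℝ)^(-α) / 4 * ((N:ℝ)/ε) := by
      field_simp
    rw [h5]
    apply mul_le_mul_of_nonneg_left _ (by positivity)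
    exact div_le_div_of_nonneg_right htN hε.le
  rw [hpow]
  calc (4:ℝ)^(-α)/4 * (t/ε) ≤ (N:ℝ) * ((4:ℝ)^(-α) * ε / (4 * ε^2)) := heq
    _ ≤ ∑ j ∈ Finset.Ico N (2*N), f j := hsum1
    _ ≤ ∑' j, f j := hsum2

set_option maxHeartbeats 800000 in
lemma eff_dim_upper (hα : 1 < α) {ε : ℝ} (hε : 0 < ε) (hε1 : ε ≤ 1) :
    (∑' j : ℕ, ((j : ℝ) + 1) ^ (-α) / (((j : ℝ) + 1) ^ (-α) + ε) ^ 2) ≤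
      (1/2 + 1/(α-1)) * ε ^ (-(α + 1) / α) := by
  obtain ⟨t, N, ht0, ht1, htε, hpow, hN1, htN, hN2t⟩ := eff_dim_cutoff hα hε hε1
  have hfsum : Summable (fun j : ℕ => ((j:ℝ)+1)^(-α) / (((j:ℝ)+1)^(-α)+ε)^2) :=
    eff_dim_fsummable hα hε
  have hsplit : ∑' j : ℕ, ((j:ℝ)+1)^(-α) / (((j:ℝ)+1)^(-α)+ε)^2
      = ∑ j ∈ Finset.range N, ((j:ℝ)+1)^(-α) / (((j:ℝ)+1)^(-α)+ε)^2
        + ∑' j : ℕ, (((j+N:ℕ):ℝ)+1)^(-α) / ((((j+N:ℕ):ℝ)+1)^(-α)+ε)^2 :=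
    (hfsum.sum_add_tsum_nat_add N).symm
  have hhead : ∑ j ∈ Finset.range N, ((j:ℝ)+1)^(-α) / (((j:ℝ)+1)^(-α)+ε)^2
      ≤ (1/2) * (t/ε) := by
    have hterm : ∀ j : ℕ, ((j:ℝ)+1)^(-α) / (((j:ℝ)+1)^(-α)+ε)^2 ≤ 1/(4*ε) := by
      intro j
      have hxpos := eff_dim_xpos (α := α) j
      have hden : (0:ℝ) < (((j:ℝ)+1)^(-α)+ε)^2 := by positivity
      rw [div_le_div_iff₀ hden (by positivity)]
      nlinarith [sq_nonneg (((j:ℝ)+1)^(-α) - ε)]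
    calc ∑ j ∈ Finset.range N, ((j:ℝ)+1)^(-α) / (((j:ℝ)+1)^(-α)+ε)^2
        ≤ ∑ _j ∈ Finset.range N, 1/(4*ε) := Finset.sum_le_sum (fun j _ => hterm j)
      _ = (N:ℝ) * (1/(4*ε)) := by rw [Finset.sum_const, Finset.card_range, nsmul_eq_mul]
      _ ≤ 2*t * (1/(4*ε)) := mul_le_mul_of_nonneg_right hN2t (by positivity)
      _ = (1/2) * (t/ε) := by field_simp; ring
  have hxtail : Summable (fun j : ℕ => ((j : ℝ) + N + 1) ^ (-α)) := by
    apply ((summable_nat_add_iff N).2 (eff_dim_xsum hα)).congr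
    intro n; push_cast; ring_nf
  have htail : ∑' j : ℕ, (((j+N:ℕ):ℝ)+1)^(-α) / ((((j+N:ℕ):ℝ)+1)^(-α)+ε)^2
      ≤ (1/(α-1)) * (t/ε) := by
    have h1 : ∑' j : ℕ, (((j+N:ℕ):ℝ)+1)^(-α) / ((((j+N:ℕ):ℝ)+1)^(-α)+ε)^2
        ≤ ∑' j : ℕ, ((j : ℝ) + N + 1) ^ (-α) * (ε^2)⁻¹ := by
      have hftail : Summable
          (fun j : ℕ => (((j+N:ℕ):ℝ)+1)^(-α) / ((((j+N:ℕ):ℝ)+1)^(-α)+ε)^2) :=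
        ((summable_nat_add_iff N).2 hfsum).congr (fun n => rfl)
      apply Summable.tsum_le_tsum _ hftail (hxtail.mul_right _)
      intro j
      have h3 : (((j + N : ℕ) : ℝ) + 1) ^ (-α) = ((j : ℝ) + N + 1) ^ (-α) := by
        push_cast; ring_nf
      rw [← h3]
      exact eff_dim_fle hε (j + N)
    have h4 : ∑' j : ℕ, ((j : ℝ) + N + 1) ^ (-α) * (ε^2)⁻¹
        = (∑' j : ℕ, ((j : ℝ) + N + 1) ^ (-α)) * (ε^2)⁻¹ := tsum_mul_right
    have h5 := eff_dim_tail α hα N hN1 hxtail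
    have hNα : (N:ℝ) ^ (1-α) ≤ t * ε := by
      have h6 : (N:ℝ) ^ (1-α) ≤ t ^ (1-α) :=
        Real.rpow_le_rpow_of_nonpos ht0 htN (by linarith)
      have h7 : t ^ (1-α) = t * ε := by
        rw [show (1-α:ℝ) = 1 + (-α) by ring, Real.rpow_add ht0, Real.rpow_one, htε]
      linarith
    have h8 : (∑' j : ℕ, ((j : ℝ) + N + 1) ^ (-α)) * (ε^2)⁻¹
        ≤ ((N:ℝ) ^ (1-α) / (α-1)) * (ε^2)⁻¹ :=
      mul_le_mul_of_nonneg_right h5 (by positivity)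
    have h9 : ((N:ℝ) ^ (1-α) / (α-1)) * (ε^2)⁻¹ ≤ (t * ε / (α-1)) * (ε^2)⁻¹ := by
      apply mul_le_mul_of_nonneg_right _ (by positivity)
      exact div_le_div_of_nonneg_right hNα (by linarith)
    have h10 : (t * ε / (α-1)) * (ε^2)⁻¹ = (1/(α-1)) * (t/ε) := by
      have hε' : ε ≠ 0 := ne_of_gt hε
      have hα1 : α - 1 ≠ 0 := by linarith
      field_simp
    rw [h4] at h1
    linarith
  rw [hsplit, hpow]
  have h11 : (1/2 + 1/(α-1)) * (t/ε) = (1/2)*(t/ε) + (1/(α-1))*(t/ε) := by ring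
  rw [h11]
  exact add_le_add hhead htail

end EffDim

/-- **Effective-dimension estimate.** For `α > 1` there are constants `0 < c ≤ C < ∞`
(depending only on `α`) such that for every `ε ∈ (0,1]` the series
`∑_{j=1}^∞ j^{-α} / (j^{-α} + ε)²` converges and is bounded above and below by constant
multiples of `ε^{-(α+1)/α}`. -/
theorem effective_dimension_estimate (α : ℝ) (hα : 1 < α) :
    ∃ c C : ℝ, 0 < c ∧ c ≤ C ∧
      ∀ ε : ℝ, 0 < ε → ε ≤ 1 →
        Summable (fun j : ℕ => ((j : ℝ) + 1) ^ (-α) / (((j : ℝ) + 1) ^ (-α) + ε) ^ 2) ∧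
        c * ε ^ (-(α + 1) / α) ≤
          (∑' j : ℕ, ((j : ℝ) + 1) ^ (-α) / (((j : ℝ) + 1) ^ (-α) + ε) ^ 2) ∧
        (∑' j : ℕ, ((j : ℝ) + 1) ^ (-α) / (((j : ℝ) + 1) ^ (-α) + ε) ^ 2) ≤
          C * ε ^ (-(α + 1) / α) := by
  refine ⟨(4:ℝ) ^ (-α) / 4, 1/2 + 1/(α-1),
    div_pos (Real.rpow_pos_of_pos (by norm_num) _) (by norm_num), ?_, ?_⟩
  · have h4 : (4:ℝ) ^ (-α) ≤ 1 :=
      Real.rpow_le_one_of_one_le_of_nonpos (by norm_num) (by linarith)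
    have h5 : (0:ℝ) < 1/(α-1) := by
      have : (0:ℝ) < α - 1 := by linarith
      positivity
    linarith
  intro ε hε hε1
  exact ⟨eff_dim_fsummable hα hε, eff_dim_lower hα hε hε1, eff_dim_upper hα hε hε1⟩
end
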